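/- Let ⟨A, B, f, i⟩ be a FIDL-module, x ∈ A, b ∈ B, and P a prime filter of A. Then f(x,b) ∈ P if and only if there exist a prime filter Q of A and a prime filter R of B such that x ∈ Q, b ∈ R, and f(Q,R) ⊆ P (i.e., f(q,r) ∈ P for all q ∈ Q, r ∈ R). -/

import Mathlib

def IsLatFilter {α : Type*} [Lattice α] [BoundedOrder α] (F : Set α) : Prop :=
  ⊤ ∈ F ∧ (∀ x y : α, x ∈ F → x ≤ y → y ∈ F) ∧ ∀ x y : α, x ∈ F → y ∈ F → x ⊓ y ∈ F

def IsPrimeLatFilter {α : Type*} [Lattice α] [BoundedOrder α] (F : Set α) : Prop :=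
  IsLatFilter F ∧ F ≠ Set.univ ∧ ∀ x y : α, x ⊔ y ∈ F → x ∈ F ∨ y ∈ F

def IsFIDL {A B : Type*} [DistribLattice A] [BoundedOrder A]
    [DistribLattice B] [BoundedOrder B] (f : A → B → A) (i : B → A → A) : Prop :=
  (∀ x y : A, ∀ b : B, f (x ⊔ y) b = f x b ⊔ f y b) ∧
  (∀ x : A, ∀ b c : B, f x (b ⊔ c) = f x b ⊔ f x c) ∧
  (∀ b : B, f ⊥ b = ⊥) ∧
  (∀ x : A, f x ⊥ = ⊥) ∧
  (∀ b : B, ∀ x y : A, i b (x ⊓ y) = i b x ⊓ i b y) ∧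
  (∀ b c : B, ∀ x : A, i (b ⊔ c) x = i b x ⊓ i c x) ∧
  (∀ b : B, i b ⊤ = ⊤)

def fSet {A B : Type*} [Lattice A] (f : A → B → A) (G : Set A) (H : Set B) : Set A :=
  {x : A | ∃ g ∈ G, ∃ h ∈ H, f g h ≤ x}

def iSet {A B : Type*} [Lattice A] (i : B → A → A) (H : Set B) (G : Set A) : Set A :=
  {x : A | ∃ h ∈ H, ∃ g ∈ G, g ≤ i h x}

/-!
By the prime filter theorem, an element outside an ideal of a distributive lattice lies in a prime
filter disjoint from it. If `f x b ∈ P`, apply this in `B` to the ideal `{c | f x c ∉ P}`, which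
is an ideal because `f x` preserves joins and `⊥` and `P` is prime: this yields `R ∋ b` with
`f x R ⊆ P`. Then apply it in `A` to `{y | ∃ r ∈ R, f y r ∉ P}`, an ideal because `R` is closed
under meets and `f` is monotone in its second argument: this yields `Q ∋ x` with `f(Q, R) ⊆ P`.
-/

open Order

section PrimeLatFilter

variable {α : Type*} [Lattice α] [BoundedOrder α] {P : Set α}

theorem IsPrimeLatFilter.bot_notMem (hP : IsPrimeLatFilter P) : ⊥ ∉ P := fun h ↦
  hP.2.1 <| Set.eq_univ_of_forall fun z ↦ hP.1.2.1 ⊥ z h bot_le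

theorem IsPrimeLatFilter.isIdeal_preimage_compl {β : Type*} [Lattice β] [OrderBot β]
    (hP : IsPrimeLatFilter P) {g : β → α} (hg : ∀ c d, g (c ⊔ d) = g c ⊔ g d) (hg₀ : g ⊥ = ⊥) :
    IsIdeal (g ⁻¹' Pᶜ) where
  IsLowerSet _ _ hcd hd hc := hd (hP.1.2.1 _ _ hc (Monotone.of_map_sup hg hcd))
  Nonempty := ⟨⊥, by simpa [hg₀] using hP.bot_notMem⟩
  Directed := SupClosed.directedOn fun c hc d hd hcd ↦ (hP.2.2 _ _ (hg c d ▸ hcd)).elim hc hd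

theorem Order.Ideal.IsPrime.isPrimeLatFilter_compl {J : Ideal α} (hJ : J.IsPrime) :
    IsPrimeLatFilter (J : Set α)ᶜ := by
  refine ⟨⟨?_, fun _ _ hx hxy ↦ Ideal.mem_compl_of_ge hxy hx,
    fun _ _ hx hy hxy ↦ (hJ.mem_or_mem hxy).elim hx hy⟩, ?_, fun _ _ hxy ↦ ?_⟩
  · exact Ideal.top_notMem_iff_ne_top.mpr hJ.toIsProper.ne_top
  · exact fun h ↦ (h ▸ Set.mem_univ ⊥ : ⊥ ∈ (J : Set α)ᶜ) J.bot_mem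
  · by_contra! h
    exact hxy (J.sup_mem (not_not.mp h.1) (not_not.mp h.2))

end PrimeLatFilter

theorem exists_isPrimeLatFilter_disjoint {α : Type*} [DistribLattice α] [BoundedOrder α]
    {I : Set α} (hI : IsIdeal I) {a : α} (ha : a ∉ I) :
    ∃ Q : Set α, IsPrimeLatFilter Q ∧ a ∈ Q ∧ Disjoint Q I := by
  have hdisj : Disjoint (PFilter.principal a : Set α) hI.toIdeal :=
    Set.disjoint_left.mpr fun _ hz hzI ↦ ha (hI.IsLowerSet (PFilter.mem_principal.mp hz) hzI)
  obtain ⟨J, hJ, hIJ, hJdisj⟩ := DistribLattice.prime_ideal_of_disjoint_filter_ideal hdisj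
  exact ⟨_, hJ.isPrimeLatFilter_compl,
    Set.disjoint_left.mp hJdisj (PFilter.mem_principal.mpr le_rfl),
    Set.disjoint_compl_left_iff_subset.mpr ((Ideal.toIdeal_le hI).mp hIJ)⟩

theorem IsPrimeLatFilter.exists_isPrimeLatFilter_of_map_mem {B C : Type*} [DistribLattice B]
    [BoundedOrder B] [Lattice C] [BoundedOrder C] {P : Set C} (hP : IsPrimeLatFilter P)
    {g : B → C} (hg : ∀ c d, g (c ⊔ d) = g c ⊔ g d) (hg₀ : g ⊥ = ⊥) {b : B} (hb : g b ∈ P) :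
    ∃ R : Set B, IsPrimeLatFilter R ∧ b ∈ R ∧ ∀ r ∈ R, g r ∈ P := by
  obtain ⟨R, hR, hbR, hRdisj⟩ :=
    exists_isPrimeLatFilter_disjoint (hP.isIdeal_preimage_compl hg hg₀) (not_not.mpr hb)
  exact ⟨R, hR, hbR, fun r hr ↦ not_not.mp (Set.disjoint_left.mp hRdisj hr)⟩

theorem IsPrimeLatFilter.exists_isPrimeLatFilter_of_forall_mem {A B C : Type*} [DistribLattice A]
    [BoundedOrder A] [Lattice B] [BoundedOrder B] [Lattice C] [BoundedOrder C] {P : Set C}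
    (hP : IsPrimeLatFilter P)
    {f : A → B → C} (hf : ∀ x y b, f (x ⊔ y) b = f x b ⊔ f y b) (hf₀ : ∀ b, f ⊥ b = ⊥)
    (hmono : ∀ x, Monotone (f x)) {R : Set B} (hR : IsLatFilter R) {x : A}
    (hx : ∀ r ∈ R, f x r ∈ P) :
    ∃ Q : Set A, IsPrimeLatFilter Q ∧ x ∈ Q ∧ ∀ q ∈ Q, ∀ r ∈ R, f q r ∈ P := by
  have hJ : IsIdeal {y | ∃ r ∈ R, f y r ∉ P} :=
    { IsLowerSet := fun _ _ hzy ⟨r, hr, hyr⟩ ↦ ⟨r, hr, fun h ↦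
        hyr (hP.1.2.1 _ _ h (Monotone.of_map_sup (f := (f · r)) (hf · · r) hzy))⟩
      Nonempty := ⟨⊥, ⊤, hR.1, by simpa [hf₀] using hP.bot_notMem⟩
      Directed := SupClosed.directedOn fun y ⟨r, hr, hyr⟩ z ⟨s, hs, hzs⟩ ↦ by
        refine ⟨r ⊓ s, hR.2.2 r s hr hs, fun h ↦ ?_⟩
        rcases hP.2.2 _ _ (hf y z _ ▸ h) with h | h
        · exact hyr (hP.1.2.1 _ _ h (hmono y inf_le_left))
        · exact hzs (hP.1.2.1 _ _ h (hmono z inf_le_right)) }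
  obtain ⟨Q, hQ, hxQ, hQdisj⟩ :=
    exists_isPrimeLatFilter_disjoint hJ fun ⟨r, hr, hxr⟩ ↦ hxr (hx r hr)
  exact ⟨Q, hQ, hxQ, fun q hq r hr ↦
    by_contra fun h ↦ Set.disjoint_left.mp hQdisj hq ⟨r, hr, h⟩⟩

theorem stmt_5 {A B : Type*} [DistribLattice A] [BoundedOrder A]
    [DistribLattice B] [BoundedOrder B] (f : A → B → A) (i : B → A → A)
    (hM : IsFIDL f i) (x : A) (b : B) (P : Set A) (hP : IsPrimeLatFilter P) :
    f x b ∈ P ↔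
      ∃ Q : Set A, ∃ R : Set B, IsPrimeLatFilter Q ∧ IsPrimeLatFilter R ∧
        x ∈ Q ∧ b ∈ R ∧ (∀ q ∈ Q, ∀ r ∈ R, f q r ∈ P) := by
  obtain ⟨hf_left, hf_right, hf_bot_left, hf_bot_right, -⟩ := hM
  refine ⟨fun hxb ↦ ?_, fun ⟨Q, R, _, _, hxQ, hbR, hQR⟩ ↦ hQR x hxQ b hbR⟩
  obtain ⟨R, hR, hbR, hxR⟩ :=
    hP.exists_isPrimeLatFilter_of_map_mem (hf_right x) (hf_bot_right x) hxb
  obtain ⟨Q, hQ, hxQ, hQR⟩ := hP.exists_isPrimeLatFilter_of_forall_mem hf_left hf_bot_left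
    (fun y ↦ Monotone.of_map_sup (hf_right y)) hR.1 hxR
  exact ⟨Q, R, hQ, hR, hxQ, hbR, hQR⟩
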